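/- Let H be a finite-dimensional complex inner product space, let P_E and P_O be orthogonal projections on H with P_E + P_O = 1, let u and v be orthonormal vectors in H, let λ₊ > 0 > λ₋, and set Δ := λ₊|u⟩⟨u| + λ₋|v⟩⟨v|. If Δ commutes with P_E, i.e., [Δ, P_E] = 0, then ⟪P_E u, P_E v⟫ = 0 and ⟪P_O u, P_O v⟫ = 0. -/

import Mathlib

open Matrix
open scoped ComplexOrder Kronecker

/-- The trace norm `‖Y‖₁ = Tr √(Yᴴ Y)` of a complex matrix. -/
noncomputable def traceNorm {m : Type*} [Fintype m] [DecidableEq m]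
    (Y : Matrix m m ℂ) : ℝ :=
  ((Matrix.posSemidef_conjTranspose_mul_self Y).1.eigenvectorUnitary.1 *
    Matrix.diagonal ((fun x : ℝ => (x : ℂ)) ∘ (√·) ∘ (Matrix.posSemidef_conjTranspose_mul_self Y).1.eigenvalues) *
    (star (Matrix.posSemidef_conjTranspose_mul_self Y).1.eigenvectorUnitary : Matrix m m ℂ)).trace.re

/-- The inner product `⟪x, y⟫ = ∑ i, conj (x i) * y i` on `m → ℂ`. -/
noncomputable def cinner {m : Type*} [Fintype m] (x y : m → ℂ) : ℂ := star x ⬝ᵥ y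

/-- An orthogonal projection: a self-adjoint idempotent matrix. -/
def IsOrthoProj {m : Type*} [Fintype m] (P : Matrix m m ℂ) : Prop :=
  P.IsHermitian ∧ P * P = P

/-- An effect: an operator `S` with `0 ≤ S ≤ 1`. -/
def IsEffect {m : Type*} [Fintype m] [DecidableEq m] (S : Matrix m m ℂ) : Prop :=
  S.PosSemidef ∧ (1 - S).PosSemidef

/-- The rank-one operator `|ψ⟩⟨ψ|`. -/
noncomputable def outer {m : Type*} (ψ : m → ℂ) : Matrix m m ℂ :=
  Matrix.vecMulVec ψ (star ψ)

/-! The rank-two operator `Δ` acts on `u` (from the left) and on `v` (from the right) as the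
scalars `λ₊` and `λ₋`. A projection commuting with `Δ` therefore maps the `λ₋`-eigenvector `v`
into the `λ₋`-eigenspace, which is orthogonal to the `λ₊`-eigenvector `u`; so `⟪u, P_E v⟫ = 0`.
For an orthogonal projection `⟪P x, P y⟫ = ⟪x, P y⟫`, and `P_O = 1 - P_E` gives the second part. -/

section

variable {m : Type*} [Fintype m]

lemma cinner_add_right (x y z : m → ℂ) : cinner x (y + z) = cinner x y + cinner x z :=
  dotProduct_add _ _ _

lemma cinner_sub_right (x y z : m → ℂ) : cinner x (y - z) = cinner x y - cinner x z :=
  dotProduct_sub _ _ _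

lemma cinner_smul_right (x y : m → ℂ) (c : ℂ) : cinner x (c • y) = c * cinner x y :=
  dotProduct_smul _ _ _

lemma outer_mulVec (ψ x : m → ℂ) : outer ψ *ᵥ x = cinner ψ x • ψ := by
  funext i
  simp only [outer, cinner, mulVec, vecMulVec_apply, dotProduct, Pi.smul_apply, smul_eq_mul,
    Finset.sum_mul]
  exact Finset.sum_congr rfl fun j _ => by ring

lemma cinner_outer_mulVec (w ψ x : m → ℂ) :
    cinner w (outer ψ *ᵥ x) = cinner ψ x * cinner w ψ := by
  rw [outer_mulVec, cinner_smul_right]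

lemma IsOrthoProj.cinner_mulVec_mulVec {P : Matrix m m ℂ} (hP : IsOrthoProj P) (x y : m → ℂ) :
    cinner (P *ᵥ x) (P *ᵥ y) = cinner x (P *ᵥ y) := by
  rw [cinner, star_mulVec, ← dotProduct_mulVec, mulVec_mulVec, hP.1.eq, hP.2, cinner]

lemma cinner_outer_add_outer_mulVec {u v : m → ℂ} (hu : cinner u u = 1) (huv : cinner u v = 0)
    (a b : ℂ) (x : m → ℂ) :
    cinner u ((a • outer u + b • outer v) *ᵥ x) = a * cinner u x := by
  rw [add_mulVec, smul_mulVec, smul_mulVec, cinner_add_right, cinner_smul_right,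
    cinner_smul_right, cinner_outer_mulVec, cinner_outer_mulVec, hu, huv]
  ring

lemma outer_add_outer_mulVec_right {u v : m → ℂ} (hv : cinner v v = 1) (huv : cinner u v = 0)
    (a b : ℂ) : (a • outer u + b • outer v) *ᵥ v = b • v := by
  rw [add_mulVec, smul_mulVec, smul_mulVec, outer_mulVec, outer_mulVec, huv, hv, zero_smul,
    smul_zero, one_smul, zero_add]

lemma cinner_mulVec_eq_zero_of_commute {Δ P : Matrix m m ℂ}
    (hcomm : Δ * P = P * Δ) {u v : m → ℂ} {a b : ℂ} (hab : a ≠ b)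
    (hu : ∀ x, cinner u (Δ *ᵥ x) = a * cinner u x) (hv : Δ *ᵥ v = b • v) :
    cinner u (P *ᵥ v) = 0 := by
  have key : a * cinner u (P *ᵥ v) = b * cinner u (P *ᵥ v) :=
    calc a * cinner u (P *ᵥ v) = cinner u (Δ *ᵥ P *ᵥ v) := (hu _).symm
      _ = cinner u (P *ᵥ Δ *ᵥ v) := by rw [mulVec_mulVec, hcomm, ← mulVec_mulVec]
      _ = b * cinner u (P *ᵥ v) := by rw [hv, mulVec_smul, cinner_smul_right]
  by_contra h
  exact hab (mul_right_cancel₀ h key)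

end

/-- **Theorem 3, forward implication.** If `Δ = λ₊|u⟩⟨u| + λ₋|v⟩⟨v|` with `u, v`
orthonormal and `λ₊ > 0 > λ₋` commutes with `P_E`, then the eigenvectors satisfy the
perfect LOCC-discriminability condition. -/
theorem commute_implies_parts_orthogonal
    {n : ℕ} (P_E P_O : Matrix (Fin n) (Fin n) ℂ)
    (hPE : IsOrthoProj P_E) (hPO : IsOrthoProj P_O) (hsum : P_E + P_O = 1)
    (u v : Fin n → ℂ) (hu : cinner u u = 1) (hv : cinner v v = 1) (huv : cinner u v = 0)
    (lp lm : ℝ) (hlp : 0 < lp) (hlm : lm < 0)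
    (Δ : Matrix (Fin n) (Fin n) ℂ) (hΔ : Δ = (lp : ℂ) • outer u + (lm : ℂ) • outer v)
    (hcomm : Δ * P_E = P_E * Δ) :
    cinner (P_E.mulVec u) (P_E.mulVec v) = 0 ∧
    cinner (P_O.mulVec u) (P_O.mulVec v) = 0 := by
  have hne : (lp : ℂ) ≠ lm := by exact_mod_cast (hlm.trans hlp).ne'
  have hE : cinner u (P_E *ᵥ v) = 0 := by
    subst hΔ
    exact cinner_mulVec_eq_zero_of_commute hcomm hne
      (cinner_outer_add_outer_mulVec hu huv _ _) (outer_add_outer_mulVec_right hv huv _ _)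
  have hO : cinner u (P_O *ᵥ v) = 0 := by
    rw [eq_sub_of_add_eq' hsum, sub_mulVec, one_mulVec, cinner_sub_right, huv, hE, sub_zero]
  exact ⟨hPE.cinner_mulVec_mulVec u v ▸ hE, hPO.cinner_mulVec_mulVec u v ▸ hO⟩
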